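/- Suppose Y is a real random variable with distribution F having finite first mean and a unique τ-quantile q_τ, and suppose G₂(t) = ln(1+e^t). Then the expected FZ^sp loss (q,e) ↦ E[FZ^sp_τ(q,e,Y)] is uniquely minimized over {(q,e) : q,e ∈ ℝ} at (q_τ, CTE_Y(τ)), where CTE_Y(τ) = E[Y | Y ≤ q_τ]. -/

import Mathlib

/-!
Write `φ(x) = log (1 + eˣ)` (softplus), so that `φ' = σ` is the logistic sigmoid, and
`M(q) = E (q - Y)⁺`. The expected loss is `σ(e) (e - A(q)) - φ(e) + E φ(Y)` with
`A(q) = q - τ⁻¹ M(q)`. Since the slopes of `M` on `[a, b]` lie between `F(a)` and `F(b)`, uniqueness of the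
quantile makes `A` uniquely maximised at `q_τ`, with maximum `A(q_τ) = CTE_Y(τ) = e_τ`
(Rockafellar–Uryasev). As `σ > 0`, the loss is therefore at least `σ(e) (e - e_τ) - φ(e) + E φ(Y)`,
which by strict convexity of `φ` is at least `-φ(e_τ) + E φ(Y)`, the loss at `(q_τ, e_τ)`;
one of the two inequalities is strict unless `(q, e) = (q_τ, e_τ)`.
-/

open MeasureTheory Set Real

noncomputable def softplus (x : ℝ) : ℝ := log (1 + exp x)

lemma exp_div_one_add_exp (x : ℝ) : exp x / (1 + exp x) = sigmoid x := by
  rw [sigmoid_def, exp_neg]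
  field_simp
  ring

lemma hasDerivAt_softplus (x : ℝ) : HasDerivAt softplus (sigmoid x) x := by
  rw [← exp_div_one_add_exp]
  exact ((hasDerivAt_exp x).const_add 1).log (by positivity) |>.congr_deriv (by ring)

lemma continuous_softplus : Continuous softplus :=
  continuous_iff_continuousAt.2 fun x => (hasDerivAt_softplus x).continuousAt

lemma strictConvexOn_softplus : StrictConvexOn ℝ univ softplus := by
  refine StrictMono.strictConvexOn_univ_of_deriv continuous_softplus ?_
  rw [show deriv softplus = sigmoid from funext fun x => (hasDerivAt_softplus x).deriv]
  exact sigmoid_strictMono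

lemma softplus_nonneg (x : ℝ) : 0 ≤ softplus x :=
  log_nonneg (by linarith [exp_pos x])

lemma softplus_le_log_two_add_abs (x : ℝ) : softplus x ≤ log 2 + |x| := by
  have hle : 1 + exp x ≤ 2 * exp |x| := by
    linarith [exp_le_exp.2 (le_abs_self x), one_le_exp (abs_nonneg x)]
  calc softplus x ≤ log (2 * exp |x|) := log_le_log (by positivity) hle
    _ = log 2 + |x| := by rw [log_mul two_ne_zero (exp_pos _).ne', log_exp]

lemma StrictConvexOn.add_mul_sub_lt {S : Set ℝ} {f : ℝ → ℝ} {f' x y : ℝ}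
    (hf : StrictConvexOn ℝ S f) (hx : x ∈ S) (hy : y ∈ S) (hf' : HasDerivAt f f' x)
    (hxy : x ≠ y) : f x + f' * (y - x) < f y := by
  rcases hxy.lt_or_gt with h | h
  · have := hf.lt_slope_of_hasDerivAt hx hy h hf'
    rw [slope_def_field, lt_div_iff₀ (sub_pos.2 h)] at this
    linarith
  · have := hf.slope_lt_of_hasDerivAt hy hx h hf'
    rw [slope_def_field, div_lt_iff₀ (sub_pos.2 h)] at this
    linarith

section LowerPartialMoment

variable {μ : Measure ℝ} [IsFiniteMeasure μ]

variable (μ) in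
noncomputable def lowerPartialMoment (q : ℝ) : ℝ := ∫ y, max (q - y) 0 ∂μ

lemma integrable_softplus (hid : Integrable id μ) : Integrable softplus μ := by
  refine ((integrable_const (log 2)).add hid.abs).mono' continuous_softplus.aestronglyMeasurable ?_
  filter_upwards with y
  rw [Real.norm_of_nonneg (softplus_nonneg y)]
  exact softplus_le_log_two_add_abs y

lemma integrable_max_sub_zero (hid : Integrable id μ) (q : ℝ) :
    Integrable (fun y => max (q - y) 0) μ :=
  ((integrable_const q).sub hid).pos_part

lemma lowerPartialMoment_eq (hid : Integrable id μ) (q : ℝ) :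
    lowerPartialMoment μ q = q * μ.real (Iic q) - ∫ y in Iic q, y ∂μ := by
  have h : (fun y => max (q - y) 0) = (Iic q).indicator (fun y => q - y) := by
    funext y
    by_cases hy : y ≤ q
    · simp [hy]
    · simp [hy, (not_le.1 hy).le]
  have hid' : Integrable (fun y : ℝ => y) (μ.restrict (Iic q)) := hid.integrableOn
  rw [lowerPartialMoment, h, integral_indicator measurableSet_Iic,
    integral_sub (integrable_const q) hid', setIntegral_const, smul_eq_mul, mul_comm]

lemma indicator_le_max_sub_sub_max_sub {a b : ℝ} (hab : a ≤ b) (y : ℝ) :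
    (Iic a).indicator (fun _ => b - a) y ≤ max (b - y) 0 - max (a - y) 0 := by
  by_cases hy : y ≤ a
  · simp [hy, show y ≤ b by linarith]
  · simp [hy, (not_le.1 hy).le]

lemma max_sub_sub_max_sub_le_indicator {a b : ℝ} (hab : a ≤ b) (y : ℝ) :
    max (b - y) 0 - max (a - y) 0 ≤ (Iic b).indicator (fun _ => b - a) y := by
  by_cases hy : y ≤ b
  · rw [indicator_of_mem (mem_Iic.2 hy), max_eq_left (sub_nonneg.2 hy)]
    linarith [le_max_left (a - y) 0]
  · simp [hy, (not_le.1 hy).le, show a ≤ y by linarith]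

lemma sub_mul_measureReal_Iic_le_lowerPartialMoment_sub (hid : Integrable id μ) {a b : ℝ}
    (hab : a ≤ b) : (b - a) * μ.real (Iic a) ≤ lowerPartialMoment μ b - lowerPartialMoment μ a := by
  calc (b - a) * μ.real (Iic a) = ∫ y, (Iic a).indicator (fun _ => b - a) y ∂μ := by
        rw [integral_indicator_const _ measurableSet_Iic, smul_eq_mul, mul_comm]
    _ ≤ ∫ y, (max (b - y) 0 - max (a - y) 0) ∂μ :=
        integral_mono ((integrable_const _).indicator measurableSet_Iic)
          ((integrable_max_sub_zero hid b).sub (integrable_max_sub_zero hid a))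
          (indicator_le_max_sub_sub_max_sub hab)
    _ = _ := integral_sub (integrable_max_sub_zero hid b) (integrable_max_sub_zero hid a)

lemma lowerPartialMoment_sub_le_sub_mul_measureReal_Iic (hid : Integrable id μ) {a b : ℝ}
    (hab : a ≤ b) : lowerPartialMoment μ b - lowerPartialMoment μ a ≤ (b - a) * μ.real (Iic b) := by
  calc lowerPartialMoment μ b - lowerPartialMoment μ a
        = ∫ y, (max (b - y) 0 - max (a - y) 0) ∂μ :=
        (integral_sub (integrable_max_sub_zero hid b) (integrable_max_sub_zero hid a)).symm
    _ ≤ ∫ y, (Iic b).indicator (fun _ => b - a) y ∂μ :=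
        integral_mono ((integrable_max_sub_zero hid b).sub (integrable_max_sub_zero hid a))
          ((integrable_const _).indicator measurableSet_Iic)
          (max_sub_sub_max_sub_le_indicator hab)
    _ = _ := by rw [integral_indicator_const _ measurableSet_Iic, smul_eq_mul, mul_comm]

lemma measureReal_Iic_lt_of_lt_quantile {τ qτ m : ℝ} (hq : μ.real (Iic qτ) = τ)
    (huniq : ∀ q, μ.real (Iio q) ≤ τ ∧ τ ≤ μ.real (Iic q) → q = qτ) (hm : m < qτ) :
    μ.real (Iic m) < τ := by
  by_contra! h
  have hIio : μ.real (Iio m) ≤ τ :=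
    hq ▸ measureReal_mono fun y hy => le_of_lt (lt_trans (mem_Iio.1 hy) hm)
  exact hm.ne (huniq m ⟨hIio, h⟩)

lemma lt_measureReal_Iic_of_quantile_lt {τ qτ m : ℝ} (hq : μ.real (Iic qτ) = τ)
    (huniq : ∀ q, μ.real (Iio q) ≤ τ ∧ τ ≤ μ.real (Iic q) → q = qτ) (hm : qτ < m) :
    τ < μ.real (Iic m) := by
  by_contra! h
  have hIic : τ ≤ μ.real (Iic m) := hq ▸ measureReal_mono (Iic_subset_Iic.2 hm.le)
  exact hm.ne' (huniq m ⟨(measureReal_mono Iio_subset_Iic_self).trans h, hIic⟩)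

lemma mul_sub_lt_lowerPartialMoment_sub (hid : Integrable id μ) {τ qτ q : ℝ}
    (hq : μ.real (Iic qτ) = τ)
    (huniq : ∀ q, μ.real (Iio q) ≤ τ ∧ τ ≤ μ.real (Iic q) → q = qτ) (hne : q ≠ qτ) :
    τ * (q - qτ) < lowerPartialMoment μ q - lowerPartialMoment μ qτ := by
  -- the slope bound at the endpoint `qτ` is not strict, so split at some `m` strictly between,
  -- where uniqueness of the quantile gives `μ.real (Iic m) ≠ τ`
  rcases hne.lt_or_gt with h | h
  · obtain ⟨m, hqm, hmqτ⟩ := exists_between h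
    have hFm := measureReal_Iic_lt_of_lt_quantile hq huniq hmqτ
    have hleft := lowerPartialMoment_sub_le_sub_mul_measureReal_Iic hid hqm.le
    have hright := lowerPartialMoment_sub_le_sub_mul_measureReal_Iic hid hmqτ.le
    rw [hq] at hright
    linarith [mul_lt_mul_of_pos_left hFm (sub_pos.2 hqm)]
  · obtain ⟨m, hqτm, hmq⟩ := exists_between h
    have hFm := lt_measureReal_Iic_of_quantile_lt hq huniq hqτm
    have hleft := sub_mul_measureReal_Iic_le_lowerPartialMoment_sub hid hqτm.le
    have hright := sub_mul_measureReal_Iic_le_lowerPartialMoment_sub hid hmq.le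
    rw [hq] at hleft
    linarith [mul_lt_mul_of_pos_left hFm (sub_pos.2 hmq)]

lemma sub_inv_mul_lowerPartialMoment_eq (hid : Integrable id μ) {τ qτ : ℝ} (hτ : τ ≠ 0)
    (hq : μ.real (Iic qτ) = τ) :
    qτ - τ⁻¹ * lowerPartialMoment μ qτ = (∫ y in Iic qτ, y ∂μ) / τ := by
  rw [lowerPartialMoment_eq hid, hq]
  field_simp
  ring

lemma sub_inv_mul_lowerPartialMoment_lt (hid : Integrable id μ) {τ qτ q : ℝ} (hτ : 0 < τ)
    (hq : μ.real (Iic qτ) = τ)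
    (huniq : ∀ q, μ.real (Iio q) ≤ τ ∧ τ ≤ μ.real (Iic q) → q = qτ) (hne : q ≠ qτ) :
    q - τ⁻¹ * lowerPartialMoment μ q < qτ - τ⁻¹ * lowerPartialMoment μ qτ := by
  have hgap := mul_sub_lt_lowerPartialMoment_sub hid hq huniq hne
  have hdiff : (qτ - τ⁻¹ * lowerPartialMoment μ qτ) - (q - τ⁻¹ * lowerPartialMoment μ q)
      = τ⁻¹ * (lowerPartialMoment μ q - lowerPartialMoment μ qτ - τ * (q - qτ)) := by
    field_simp
    ring
  linarith [mul_pos (inv_pos.2 hτ) (sub_pos.2 hgap)]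

end LowerPartialMoment

noncomputable def fzSoftplusLoss (τ q e y : ℝ) : ℝ :=
  exp e / (1 + exp e) * (e + τ⁻¹ * max (q - y) 0 - q) - log (1 + exp e) + log (1 + exp y)

lemma integral_fzSoftplusLoss {μ : Measure ℝ} [IsProbabilityMeasure μ] (hid : Integrable id μ)
    (τ q e : ℝ) :
    ∫ y, fzSoftplusLoss τ q e y ∂μ
      = sigmoid e * (e - (q - τ⁻¹ * lowerPartialMoment μ q)) - softplus e
        + ∫ y, softplus y ∂μ := by
  have h : (fun y => fzSoftplusLoss τ q e y) = fun y =>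
      (sigmoid e * (e - q) - softplus e) + (sigmoid e * τ⁻¹ * max (q - y) 0 + softplus y) := by
    funext y
    rw [fzSoftplusLoss, exp_div_one_add_exp]
    unfold softplus
    ring
  have hmax := (integrable_max_sub_zero hid q).const_mul (sigmoid e * τ⁻¹)
  have hsum : Integrable (fun y => sigmoid e * τ⁻¹ * max (q - y) 0 + softplus y) μ :=
    hmax.add (integrable_softplus hid)
  rw [h, integral_add (integrable_const _) hsum, integral_add hmax (integrable_softplus hid),
    integral_const_mul, integral_const, probReal_univ, one_smul, lowerPartialMoment]
  ring

/-- Strict consistency of the softplus FZ loss: the expected loss is uniquely minimized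
at the (unique) `τ`-quantile and the corresponding conditional tail expectation. -/
theorem stmt10 (μ : Measure ℝ) [IsProbabilityMeasure μ]
    (hid : Integrable id μ)
    (τ : ℝ) (hτ : τ ∈ Set.Ioo (0:ℝ) 1)
    (qτ : ℝ)
    (hq : (μ (Set.Iic qτ)).toReal = τ)
    (huniq : ∀ q : ℝ, (μ (Set.Iio q)).toReal ≤ τ ∧ τ ≤ (μ (Set.Iic q)).toReal → q = qτ)
    (eτ : ℝ) (heτ : eτ = (∫ y in Set.Iic qτ, y ∂μ) / τ)
    (FZ : ℝ → ℝ → ℝ → ℝ)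
    (hFZ : ∀ q e y, FZ q e y = (Real.exp e / (1 + Real.exp e)) * (e + τ⁻¹ * max (q - y) 0 - q)
        - Real.log (1 + Real.exp e) + Real.log (1 + Real.exp y)) :
    ∀ q e : ℝ, (q, e) ≠ (qτ, eτ) →
      (∫ y, FZ qτ eτ y ∂μ) < ∫ y, FZ q e y ∂μ := by
  intro q e hne
  obtain rfl : FZ = fzSoftplusLoss τ := funext₃ hFZ
  have htail : qτ - τ⁻¹ * lowerPartialMoment μ qτ = eτ :=
    heτ ▸ sub_inv_mul_lowerPartialMoment_eq hid hτ.1.ne' hq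
  have htangent {e' : ℝ} (he : e ≠ e') : softplus e + sigmoid e * (e' - e) < softplus e' :=
    strictConvexOn_softplus.add_mul_sub_lt (mem_univ _) (mem_univ _) (hasDerivAt_softplus e) he
  rw [integral_fzSoftplusLoss hid, integral_fzSoftplusLoss hid, htail, sub_self, mul_zero]
  rcases eq_or_ne q qτ with rfl | hqne
  · have he : e ≠ eτ := fun h => hne (by rw [h])
    rw [htail]
    linarith [htangent he]
  · have hRU := htail ▸ sub_inv_mul_lowerPartialMoment_lt hid hτ.1 hq huniq hqne
    have hle : softplus e + sigmoid e * (eτ - e) ≤ softplus eτ := by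
      rcases eq_or_ne e eτ with rfl | he
      · simp
      · exact (htangent he).le
    linarith [mul_lt_mul_of_pos_left hRU (sigmoid_pos e)]
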